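/- Let q be an odd prime power, let n ≥ 3, and suppose A ⊆ F_q is a set of size n with no arithmetic progression of length 3, i.e., there are no distinct x, y, z ∈ A with x + y = 2z. Then there exists an MR (m=3, n, a=1, b=1, h=1) grid code over F_q. -/

import Mathlib

open Finset

/-- A subset of `[m] × [n]`, viewed as the edge set of a bipartite graph with left
vertex set `Fin m` and right vertex set `Fin n`, is a *simple cycle* (of length `2k`,
`k ≥ 2`) if it has the form
`{(i₁,j₁),(i₂,j₁),(i₂,j₂),(i₃,j₂),…,(i_k,j_k),(i₁,j_k)}`
for pairwise distinct `i₁,…,i_k` and pairwise distinct `j₁,…,j_k`. -/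
def IsSimpleCycle {m n : ℕ} (C : Finset (Fin m × Fin n)) : Prop :=
  ∃ k : ℕ, 2 ≤ k ∧ ∃ (I : ℕ → Fin m) (J : ℕ → Fin n),
    Set.InjOn I (Set.Iio k) ∧ Set.InjOn J (Set.Iio k) ∧
    C = ((Finset.range k).image fun ℓ => (I ℓ, J ℓ)) ∪
        ((Finset.range k).image fun ℓ => (I ((ℓ + 1) % k), J ℓ))

/-- An edge set is *acyclic* if it contains no simple cycle. -/
def IsAcyclicEdges {m n : ℕ} (E : Finset (Fin m × Fin n)) : Prop :=
  ∀ C ⊆ E, ¬ IsSimpleCycle C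

/-- The parity-check matrix of an `(m, n, a = 1, b = 1, h)` grid code over `F` with
global parity-check vectors `c`.  Rows are indexed by `Fin m ⊕ (Fin (n-1) ⊕ Fin h)`
(the `m` row checks, the first `n - 1` column checks, and the `h` global checks) and
columns by `Fin m × Fin n`. -/
def gridH (F : Type*) [Field F] (m n h : ℕ) (c : Fin m × Fin n → Fin h → F) :
    Matrix (Fin m ⊕ (Fin (n - 1) ⊕ Fin h)) (Fin m × Fin n) F :=
  Matrix.of fun r ij =>
    Sum.elim (fun i => if ij.1 = i then (1 : F) else 0)
      (Sum.elim (fun j : Fin (n - 1) => if (ij.2 : ℕ) = (j : ℕ) then (1 : F) else 0)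
        (fun k => c ij k)) r

/-- The grid code with global parity checks `c` is *maximally recoverable* (MR) if the
columns of its parity-check matrix indexed by `E` are linearly independent for every
pattern `E` which is the union of an acyclic edge set and at most `h` further edges. -/
def IsMR (F : Type*) [Field F] (m n h : ℕ) (c : Fin m × Fin n → Fin h → F) : Prop :=
  ∀ E : Finset (Fin m × Fin n),
    (∃ E' F' : Finset (Fin m × Fin n),
        IsAcyclicEdges E' ∧ F'.card ≤ h ∧ E = E' ∪ F') →
    ((gridH F m n h c).submatrix id (fun e : E => (e : Fin m × Fin n))).rank = E.card

/-- A *spanning tree* of the complete bipartite graph on `[m] ⊔ [n]`: an acyclic edge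
set with `m + n - 1` edges. -/
def IsSpanningTree {m n : ℕ} (T : Finset (Fin m × Fin n)) : Prop :=
  IsAcyclicEdges T ∧ T.card = m + n - 1

/-- `IsCycleSumOf c C s` says `C` is a simple cycle
`{(i₁,j₁),(i₂,j₁),…,(i_k,j_k),(i₁,j_k)}` and
`s = Σ_{ℓ=1}^{k} (c^{i_ℓ,j_ℓ} − c^{i_{ℓ+1},j_ℓ})` (with `i_{k+1} := i₁`) is the
corresponding cycle sum `Σ_H(C) ∈ F^h`. -/
def IsCycleSumOf {F : Type*} [Field F] {m n h : ℕ} (c : Fin m × Fin n → Fin h → F)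
    (C : Finset (Fin m × Fin n)) (s : Fin h → F) : Prop :=
  ∃ k : ℕ, 2 ≤ k ∧ ∃ (I : ℕ → Fin m) (J : ℕ → Fin n),
    Set.InjOn I (Set.Iio k) ∧ Set.InjOn J (Set.Iio k) ∧
    C = ((Finset.range k).image fun ℓ => (I ℓ, J ℓ)) ∪
        ((Finset.range k).image fun ℓ => (I ((ℓ + 1) % k), J ℓ)) ∧
    s = ∑ ℓ ∈ Finset.range k, (c (I ℓ, J ℓ) - c (I ((ℓ + 1) % k), J ℓ))

/-- `IsGammaCycleSumOf γ C g` says `C` is a simple cycle and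
`g = γ(C) = Σ_{ℓ=1}^{k} (γ(i_ℓ,j_ℓ) − γ(i_{ℓ+1},j_ℓ))`. -/
def IsGammaCycleSumOf {F : Type*} [Field F] {m n : ℕ} (γ : Fin m × Fin n → F)
    (C : Finset (Fin m × Fin n)) (g : F) : Prop :=
  ∃ k : ℕ, 2 ≤ k ∧ ∃ (I : ℕ → Fin m) (J : ℕ → Fin n),
    Set.InjOn I (Set.Iio k) ∧ Set.InjOn J (Set.Iio k) ∧
    C = ((Finset.range k).image fun ℓ => (I ℓ, J ℓ)) ∪
        ((Finset.range k).image fun ℓ => (I ((ℓ + 1) % k), J ℓ)) ∧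
    g = ∑ ℓ ∈ Finset.range k, (γ (I ℓ, J ℓ) - γ (I ((ℓ + 1) % k), J ℓ))

/-!
Take `c^{i,j} = i · a_j`, where `a` enumerates `A`. A kernel vector of `H|_E` is a flow on the
grid (all row and column sums vanish) whose inner product with `c` is zero. In a grid with three
rows every nonzero flow has a `4`- or `6`-cycle in its support, so a flow supported on an acyclic
set vanishes, and a flow supported on `E' ∪ {f}` is a multiple of the alternating `±1` flow around
a cycle through `f`. The inner product of that flow with `c` is the cycle sum: up to sign
`(i - i') (a_j - a_{j'})` for a `4`-cycle, which is nonzero because `q` is odd, and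
`a_j + a_{j'} - 2 a_{j''}` for a `6`-cycle, which is nonzero because `A` has no `3`-term
progression.
-/

open Matrix Function

section Flow

variable {F : Type*} [Field F] {m n : ℕ}

def IsGridFlow (X : Fin m × Fin n → F) : Prop :=
  (∀ i, ∑ j, X (i, j) = 0) ∧ ∀ j, ∑ i, X (i, j) = 0

theorem IsGridFlow.sub {X Y : Fin m × Fin n → F} (hX : IsGridFlow X) (hY : IsGridFlow Y) :
    IsGridFlow (X - Y) :=
  ⟨fun i => by simp [sum_sub_distrib, hX.1 i, hY.1 i],
    fun j => by simp [sum_sub_distrib, hX.2 j, hY.2 j]⟩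

theorem IsGridFlow.smul {X : Fin m × Fin n → F} (hX : IsGridFlow X) (c : F) :
    IsGridFlow (c • X) :=
  ⟨fun i => by simp [← mul_sum, hX.1 i], fun j => by simp [← mul_sum, hX.2 j]⟩

theorem gridH_mulVec_inl {h : ℕ} (c : Fin m × Fin n → Fin h → F) (X : Fin m × Fin n → F)
    (i : Fin m) : (gridH F m n h c *ᵥ X) (.inl i) = ∑ j, X (i, j) := by
  simp only [gridH, mulVec, dotProduct, of_apply, Sum.elim_inl, ite_mul, one_mul, zero_mul,
    Fintype.sum_prod_type]
  rw [sum_comm]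
  simp

theorem gridH_mulVec_inr_inl {h : ℕ} (c : Fin m × Fin n → Fin h → F) (X : Fin m × Fin n → F)
    (j : Fin (n - 1)) :
    (gridH F m n h c *ᵥ X) (.inr (.inl j)) = ∑ i, X (i, Fin.castLE (Nat.sub_le n 1) j) := by
  simp only [gridH, mulVec, dotProduct, of_apply, Sum.elim_inr, Sum.elim_inl, ite_mul, one_mul,
    zero_mul, Fintype.sum_prod_type]
  have hcast (x : Fin n) : (x : ℕ) = j ↔ x = Fin.castLE (Nat.sub_le n 1) j := by simp [Fin.ext_iff]
  simp [hcast]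

theorem gridH_mulVec_inr_inr {h : ℕ} (c : Fin m × Fin n → Fin h → F) (X : Fin m × Fin n → F)
    (k : Fin h) : (gridH F m n h c *ᵥ X) (.inr (.inr k)) = ∑ p, c p k * X p :=
  rfl

theorem isGridFlow_of_gridH_mulVec_eq_zero {h : ℕ} {c : Fin m × Fin n → Fin h → F}
    {X : Fin m × Fin n → F} (hX : gridH F m n h c *ᵥ X = 0) : IsGridFlow X := by
  have hrow (i : Fin m) : ∑ j, X (i, j) = 0 := by
    rw [← gridH_mulVec_inl c, hX, Pi.zero_apply]
  have hcol (j : Fin n) (hj : (j : ℕ) < n - 1) : ∑ i, X (i, j) = 0 := by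
    simpa using (gridH_mulVec_inr_inl c X ⟨j, hj⟩).symm.trans (congrFun hX _)
  refine ⟨hrow, fun j => ?_⟩
  by_cases hj : (j : ℕ) < n - 1
  · exact hcol j hj
  -- `gridH` has no check for the last column: it follows from the row checks and the other columns
  have htotal : ∑ j', ∑ i, X (i, j') = 0 := by
    rw [sum_comm]
    exact sum_eq_zero fun i _ => hrow i
  rwa [Fintype.sum_eq_single j fun j' hj' => hcol j' (by omega)] at htotal

theorem Matrix.rank_submatrix_col_eq_card {R ι : Type*} [Fintype R] [Fintype ι] [DecidableEq ι]
    (M : Matrix R ι F) (E : Finset ι)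
    (h : ∀ X : ι → F, (∀ p ∉ E, X p = 0) → M *ᵥ X = 0 → X = 0) :
    (M.submatrix id (fun e : E => (e : ι))).rank = E.card := by
  rw [rank, LinearMap.finrank_range_of_inj, Module.finrank_fintype_fun_eq_card,
    Fintype.card_coe]
  rw [← LinearMap.ker_eq_bot, LinearMap.ker_eq_bot']
  intro x hx
  have := h (fun p => if hp : p ∈ E then x ⟨p, hp⟩ else 0) (fun p hp => dif_neg hp) ?_
  · funext e
    simpa using congrFun this e
  · rw [← hx]
    ext r
    simp only [mulVec, dotProduct, mulVecLin_apply, submatrix_apply, id]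
    rw [← Finset.sum_subset E.subset_univ (by simp_all), ← Finset.sum_attach]
    simp

end Flow

section Cycle

variable {F : Type*} [Field F] {m n : ℕ}

def cycleEdges (k : ℕ) (I : ℕ → Fin m) (J : ℕ → Fin n) : Finset (Fin m × Fin n) :=
  ((range k).image fun ℓ => (I ℓ, J ℓ)) ∪ ((range k).image fun ℓ => (I ((ℓ + 1) % k), J ℓ))

theorem isSimpleCycle_cycleEdges {k : ℕ} (hk : 2 ≤ k) {I : ℕ → Fin m} {J : ℕ → Fin n}
    (hI : Set.InjOn I (Set.Iio k)) (hJ : Set.InjOn J (Set.Iio k)) :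
    IsSimpleCycle (cycleEdges k I J) :=
  ⟨k, hk, I, J, hI, hJ, rfl⟩

theorem forall_mem_cycleEdges {k : ℕ} {I : ℕ → Fin m} {J : ℕ → Fin n}
    {P : Fin m × Fin n → Prop} :
    (∀ p ∈ cycleEdges k I J, P p) ↔ ∀ ℓ < k, P (I ℓ, J ℓ) ∧ P (I ((ℓ + 1) % k), J ℓ) := by
  simp only [cycleEdges, Finset.forall_mem_union, Finset.forall_mem_image, Finset.mem_range,
    forall_and]

theorem Finset.sum_range_succ_mod {M : Type*} [AddCommMonoid M] (f : ℕ → M) (k : ℕ) :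
    ∑ ℓ ∈ range k, f ((ℓ + 1) % k) = ∑ ℓ ∈ range k, f ℓ := by
  rcases k with _ | k
  · rfl
  rw [sum_range_succ, sum_range_succ', Nat.mod_self]
  congr 1
  exact sum_congr rfl fun ℓ hℓ => by rw [Nat.mod_eq_of_lt (by simpa using hℓ)]

theorem Fintype.sum_pi_single_prod_left {α β M : Type*} [DecidableEq α] [DecidableEq β]
    [Fintype β] [AddCommMonoid M] (a : α) (b : β) (x : M) (i : α) :
    ∑ j, (Pi.single (a, b) x : α × β → M) (i, j) = (Pi.single a x : α → M) i := by
  by_cases h : i = a <;> simp [Pi.single_apply, h]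

theorem Fintype.sum_pi_single_prod_right {α β M : Type*} [DecidableEq α] [DecidableEq β]
    [Fintype α] [AddCommMonoid M] (a : α) (b : β) (x : M) (j : β) :
    ∑ i, (Pi.single (a, b) x : α × β → M) (i, j) = (Pi.single b x : β → M) j := by
  by_cases h : j = b <;> simp [Pi.single_apply, h]

def cycleFlow (k : ℕ) (I : ℕ → Fin m) (J : ℕ → Fin n) : Fin m × Fin n → F :=
  ∑ ℓ ∈ range k, (Pi.single (I ℓ, J ℓ) 1 - Pi.single (I ((ℓ + 1) % k), J ℓ) 1)

theorem isGridFlow_cycleFlow (k : ℕ) (I : ℕ → Fin m) (J : ℕ → Fin n) :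
    IsGridFlow (cycleFlow (F := F) k I J) := by
  constructor
  · intro i
    simp only [cycleFlow, Finset.sum_apply, Pi.sub_apply]
    rw [sum_comm]
    simp only [sum_sub_distrib, Fintype.sum_pi_single_prod_left]
    rw [sum_range_succ_mod (fun ℓ => (Pi.single (I ℓ) (1 : F) : Fin m → F) i), sub_self]
  · intro j
    simp only [cycleFlow, Finset.sum_apply, Pi.sub_apply]
    rw [sum_comm]
    simp only [sum_sub_distrib, Fintype.sum_pi_single_prod_right, sub_self, sum_const_zero]

theorem cycleFlow_eq_zero_of_notMem {k : ℕ} {I : ℕ → Fin m} {J : ℕ → Fin n} {p : Fin m × Fin n}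
    (hp : p ∉ cycleEdges k I J) : cycleFlow (F := F) k I J p = 0 := by
  simp only [cycleFlow, Finset.sum_apply, Pi.sub_apply]
  refine sum_eq_zero fun ℓ hℓ => ?_
  simp only [cycleEdges, mem_union, mem_image, not_or, not_exists, not_and] at hp
  rw [Pi.single_eq_of_ne (Ne.symm (hp.1 ℓ hℓ)), Pi.single_eq_of_ne (Ne.symm (hp.2 ℓ hℓ)), sub_zero]

theorem weighted_sum_cycleFlow (w : Fin m × Fin n → F) (k : ℕ) (I : ℕ → Fin m) (J : ℕ → Fin n) :
    ∑ p, w p * cycleFlow k I J p = ∑ ℓ ∈ range k, (w (I ℓ, J ℓ) - w (I ((ℓ + 1) % k), J ℓ)) := by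
  simp only [cycleFlow, Finset.sum_apply, Pi.sub_apply, mul_sum, mul_sub]
  rw [sum_comm]
  simp [sum_sub_distrib, Pi.single_apply]

theorem cycleFlow_apply_snd {k ℓ : ℕ} (hℓ : ℓ < k) (I : ℕ → Fin m) {J : ℕ → Fin n}
    (hJ : Set.InjOn J (Set.Iio k)) (i : Fin m) :
    cycleFlow (F := F) k I J (i, J ℓ) =
      (Pi.single (I ℓ) 1 : Fin m → F) i - (Pi.single (I ((ℓ + 1) % k)) 1 : Fin m → F) i := by
  simp only [cycleFlow, Finset.sum_apply, Pi.sub_apply]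
  rw [sum_eq_single_of_mem ℓ (mem_range.2 hℓ)]
  · simp [Pi.single_apply]
  · intro ℓ' hℓ' hne
    have hJne : J ℓ' ≠ J ℓ := fun h => hne (hJ (mem_range.1 hℓ') hℓ h)
    simp [hJne.symm]

theorem Nat.succ_mod_ne_self {k ℓ : ℕ} (hk : 2 ≤ k) (hℓ : ℓ < k) : (ℓ + 1) % k ≠ ℓ := by
  rcases (Nat.succ_le_of_lt hℓ).lt_or_eq with h | h
  · rw [Nat.mod_eq_of_lt h]; omega
  · rw [← Nat.succ_eq_add_one, h, Nat.mod_self]; omega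

theorem cycleFlow_ne_zero {k : ℕ} (hk : 2 ≤ k) {I : ℕ → Fin m} {J : ℕ → Fin n}
    (hI : Set.InjOn I (Set.Iio k)) (hJ : Set.InjOn J (Set.Iio k)) {p : Fin m × Fin n}
    (hp : p ∈ cycleEdges k I J) : cycleFlow (F := F) k I J p ≠ 0 := by
  have hIne : ∀ ℓ < k, I ((ℓ + 1) % k) ≠ I ℓ := fun ℓ hℓ h =>
    Nat.succ_mod_ne_self hk hℓ (hI (Nat.mod_lt _ (by omega)) hℓ h)
  simp only [cycleEdges, mem_union, mem_image, mem_range] at hp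
  rcases hp with ⟨ℓ, hℓ, rfl⟩ | ⟨ℓ, hℓ, rfl⟩ <;> simp [cycleFlow_apply_snd hℓ I hJ, hIne ℓ hℓ]

theorem exists_cycle_two {P : Fin m × Fin n → Prop} {i₀ i₁ : Fin m} {j₀ j₁ : Fin n}
    (hi : i₀ ≠ i₁) (hj : j₀ ≠ j₁)
    (h₀₀ : P (i₀, j₀)) (h₁₀ : P (i₁, j₀)) (h₁₁ : P (i₁, j₁)) (h₀₁ : P (i₀, j₁)) :
    ∃ I J, Set.InjOn I (Set.Iio 2) ∧ Set.InjOn J (Set.Iio 2) ∧ ∀ p ∈ cycleEdges 2 I J, P p := by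
  refine ⟨fun ℓ => if ℓ = 0 then i₀ else i₁, fun ℓ => if ℓ = 0 then j₀ else j₁, ?_, ?_, ?_⟩
  · intro a ha b hb
    simp only [Set.mem_Iio] at ha hb
    interval_cases a <;> interval_cases b <;> simp [hi, hi.symm]
  · intro a ha b hb
    simp only [Set.mem_Iio] at ha hb
    interval_cases a <;> interval_cases b <;> simp [hj, hj.symm]
  · refine forall_mem_cycleEdges.2 fun ℓ hℓ => ?_
    interval_cases ℓ <;> simp [*]

theorem exists_cycle_three {P : Fin m × Fin n → Prop} {i₀ i₁ i₂ : Fin m} {j₀ j₁ j₂ : Fin n}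
    (hi₀₁ : i₀ ≠ i₁) (hi₀₂ : i₀ ≠ i₂) (hi₁₂ : i₁ ≠ i₂)
    (hj₀₁ : j₀ ≠ j₁) (hj₀₂ : j₀ ≠ j₂) (hj₁₂ : j₁ ≠ j₂)
    (h₀₀ : P (i₀, j₀)) (h₁₀ : P (i₁, j₀)) (h₁₁ : P (i₁, j₁)) (h₂₁ : P (i₂, j₁))
    (h₂₂ : P (i₂, j₂)) (h₀₂ : P (i₀, j₂)) :
    ∃ I J, Set.InjOn I (Set.Iio 3) ∧ Set.InjOn J (Set.Iio 3) ∧ ∀ p ∈ cycleEdges 3 I J, P p := by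
  refine ⟨fun ℓ => if ℓ = 0 then i₀ else if ℓ = 1 then i₁ else i₂,
    fun ℓ => if ℓ = 0 then j₀ else if ℓ = 1 then j₁ else j₂, ?_, ?_, ?_⟩
  · intro a ha b hb
    simp only [Set.mem_Iio] at ha hb
    interval_cases a <;> interval_cases b <;> simp [*, Ne.symm]
  · intro a ha b hb
    simp only [Set.mem_Iio] at ha hb
    interval_cases a <;> interval_cases b <;> simp [*, Ne.symm]
  · refine forall_mem_cycleEdges.2 fun ℓ hℓ => ?_
    interval_cases ℓ <;> simp [*]

end Cycle

section ThreeRows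

variable {F : Type*} [Field F] {n : ℕ}

theorem exists_short_cycle {P : Fin 3 × Fin n → Prop} {p : Fin 3 × Fin n} (hp : P p)
    (hrow : ∀ p, P p → ∃ j ≠ p.2, P (p.1, j)) (hcol : ∀ p, P p → ∃ i ≠ p.1, P (i, p.2)) :
    ∃ k, (k = 2 ∨ k = 3) ∧ ∃ I J, Set.InjOn I (Set.Iio k) ∧ Set.InjOn J (Set.Iio k) ∧
      ∀ q ∈ cycleEdges k I J, P q := by
  obtain ⟨i₀, j₀⟩ := p
  obtain ⟨i₁, hi₁, h₁₀⟩ := hcol _ hp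
  obtain ⟨j₁, hj₁, h₀₁⟩ := hrow _ hp
  by_cases h₁₁ : P (i₁, j₁)
  · exact ⟨2, .inl rfl, exists_cycle_two hi₁.symm hj₁.symm hp h₁₀ h₁₁ h₀₁⟩
  obtain ⟨j₂, hj₂, h₁₂⟩ := hrow _ h₁₀
  have hj₂₁ : j₂ ≠ j₁ := by rintro rfl; exact h₁₁ h₁₂
  obtain ⟨i₂, hi₂, h₂₂⟩ := hcol _ h₁₂
  by_cases hi₂₀ : i₂ = i₀
  · subst hi₂₀
    exact ⟨2, .inl rfl, exists_cycle_two hi₁.symm hj₂.symm hp h₁₀ h₁₂ h₂₂⟩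
  obtain ⟨i₃, hi₃, h₃₁⟩ := hcol _ h₀₁
  have hi₃₁ : i₃ ≠ i₁ := by rintro rfl; exact h₁₁ h₃₁
  -- there are only three rows
  obtain rfl : i₃ = i₂ := by simp only at hi₁ hi₂ hi₃; omega
  exact ⟨3, .inr rfl, exists_cycle_three hi₁.symm (Ne.symm hi₂₀) hi₂.symm hj₂.symm hj₁.symm hj₂₁
    hp h₁₀ h₁₂ h₂₂ h₃₁ h₀₁⟩

theorem Fintype.exists_ne_ne_zero_of_sum_eq_zero {ι M : Type*} [Fintype ι] [AddCommMonoid M]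
    {f : ι → M} (hf : ∑ t, f t = 0) {t : ι} (ht : f t ≠ 0) : ∃ s ≠ t, f s ≠ 0 := by
  by_contra! h
  exact ht (Fintype.sum_eq_single t h ▸ hf)

theorem IsGridFlow.exists_short_cycle {X : Fin 3 × Fin n → F} (hX : IsGridFlow X) (hX₀ : X ≠ 0) :
    ∃ k, (k = 2 ∨ k = 3) ∧ ∃ I J, Set.InjOn I (Set.Iio k) ∧ Set.InjOn J (Set.Iio k) ∧
      ∀ q ∈ cycleEdges k I J, X q ≠ 0 := by
  obtain ⟨p, hp⟩ := Function.ne_iff.1 hX₀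
  exact _root_.exists_short_cycle hp
    (fun p hp => Fintype.exists_ne_ne_zero_of_sum_eq_zero (hX.1 p.1) hp)
    (fun p hp => Fintype.exists_ne_ne_zero_of_sum_eq_zero (hX.2 p.2) hp)

theorem IsGridFlow.eq_zero_of_support_subset {X : Fin 3 × Fin n → F} (hX : IsGridFlow X)
    {E : Finset (Fin 3 × Fin n)} (hE : IsAcyclicEdges E) (hXE : ∀ p, X p ≠ 0 → p ∈ E) :
    X = 0 := by
  by_contra hX₀
  obtain ⟨k, hk, I, J, hI, hJ, hC⟩ := hX.exists_short_cycle hX₀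
  exact hE _ (fun q hq => hXE q (hC q hq)) (isSimpleCycle_cycleEdges (by omega) hI hJ)

theorem IsGridFlow.eq_smul_of_support_subset_insert {X Z : Fin 3 × Fin n → F}
    (hX : IsGridFlow X) (hZ : IsGridFlow Z) {E : Finset (Fin 3 × Fin n)} (hE : IsAcyclicEdges E)
    {f : Fin 3 × Fin n} (hXE : ∀ p, X p ≠ 0 → p ∈ insert f E)
    (hZE : ∀ p, Z p ≠ 0 → p ∈ insert f E) (hZf : Z f ≠ 0) :
    X = (X f / Z f) • Z := by
  refine sub_eq_zero.1 ((hX.sub (hZ.smul _)).eq_zero_of_support_subset hE fun p hp => ?_)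
  have hpf : p ≠ f := by
    rintro rfl
    simp [div_mul_cancel₀ _ hZf] at hp
  by_cases hXp : X p = 0
  · have hZp : Z p ≠ 0 := by rintro h; simp [hXp, h] at hp
    exact (mem_insert.1 (hZE p hZp)).resolve_left hpf
  · exact (mem_insert.1 (hXE p hXp)).resolve_left hpf

theorem IsGridFlow.eq_zero_of_cycleSum_ne_zero {w X : Fin 3 × Fin n → F}
    (hw : ∀ k, (k = 2 ∨ k = 3) → ∀ I J, Set.InjOn I (Set.Iio k) → Set.InjOn J (Set.Iio k) →
      ∑ ℓ ∈ range k, (w (I ℓ, J ℓ) - w (I ((ℓ + 1) % k), J ℓ)) ≠ 0)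
    (hX : IsGridFlow X) {E G : Finset (Fin 3 × Fin n)} (hE : IsAcyclicEdges E) (hG : G.card ≤ 1)
    (hXE : ∀ p, X p ≠ 0 → p ∈ E ∪ G) (hXw : ∑ p, w p * X p = 0) : X = 0 := by
  by_contra hX₀
  obtain ⟨k, hk, I, J, hI, hJ, hC⟩ := hX.exists_short_cycle hX₀
  have hk₂ : 2 ≤ k := by omega
  obtain ⟨f, hfC, hfE⟩ : ∃ f ∈ cycleEdges k I J, f ∉ E := by
    by_contra! hCE
    exact hE _ hCE (isSimpleCycle_cycleEdges hk₂ hI hJ)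
  have hG' : G ⊆ {f} := by
    have hfG : f ∈ G := (mem_union.1 (hXE f (hC f hfC))).resolve_left hfE
    exact fun g hg => mem_singleton.2 (card_le_one.1 hG g hg f hfG)
  have hXE' : ∀ p, X p ≠ 0 → p ∈ insert f E := fun p hp => by
    rcases mem_union.1 (hXE p hp) with h | h
    · exact mem_insert_of_mem h
    · exact mem_insert.2 (.inl (mem_singleton.1 (hG' h)))
  set Z : Fin 3 × Fin n → F := cycleFlow k I J
  have hZf : Z f ≠ 0 := cycleFlow_ne_zero hk₂ hI hJ hfC
  have hXZ := hX.eq_smul_of_support_subset_insert (isGridFlow_cycleFlow k I J) hE hXE'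
    (fun p hp => hXE' p (hC p (not_imp_comm.1 cycleFlow_eq_zero_of_notMem hp))) hZf
  have hr : X f / Z f ≠ 0 := div_ne_zero (hC f hfC) hZf
  generalize X f / Z f = r at hXZ hr
  subst hXZ
  refine mul_ne_zero hr (hw k hk I J hI hJ) ?_
  rw [← weighted_sum_cycleFlow, mul_sum, ← hXw]
  simp [mul_left_comm]

end ThreeRows

section APFree

variable {F : Type*} [Field F] {n : ℕ}

theorem natCast_val_fin_three_injective (h2 : (2 : F) ≠ 0) :
    Injective (fun i : Fin 3 => ((i : ℕ) : F)) := by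
  have h12 : (1 : F) ≠ 2 := fun h => one_ne_zero (by linear_combination -h)
  intro i j h
  fin_cases i <;> fin_cases j <;> simp_all

theorem cycleSum_ne_zero_of_forall_add_ne_two_mul {a : Fin n → F} (h2 : (2 : F) ≠ 0)
    (ha : Injective a)
    (hAP : ∀ j₁ j₂ j₃, j₁ ≠ j₂ → j₂ ≠ j₃ → j₁ ≠ j₃ → a j₁ + a j₂ ≠ 2 * a j₃)
    {k : ℕ} (hk : k = 2 ∨ k = 3) {I : ℕ → Fin 3} {J : ℕ → Fin n}
    (hI : Set.InjOn I (Set.Iio k)) (hJ : Set.InjOn J (Set.Iio k)) :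
    ∑ ℓ ∈ range k, (((I ℓ : ℕ) : F) * a (J ℓ) - ((I ((ℓ + 1) % k) : ℕ) : F) * a (J ℓ)) ≠ 0 := by
  rcases hk with rfl | rfl
  · have hI₀₁ := (natCast_val_fin_three_injective h2).ne
      (hI.ne (by simp) (by simp) (by decide : (0 : ℕ) ≠ 1))
    have hJ₀₁ := ha.ne (hJ.ne (by simp) (by simp) (by decide : (0 : ℕ) ≠ 1))
    simp only [sum_range_succ, sum_range_zero]
    norm_num
    intro h
    exact mul_ne_zero (sub_ne_zero.2 hI₀₁) (sub_ne_zero.2 hJ₀₁) (by linear_combination h)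
  · have hI₀₁ := hI.ne (by simp) (by simp) (by decide : (0 : ℕ) ≠ 1)
    have hI₀₂ := hI.ne (by simp) (by simp) (by decide : (0 : ℕ) ≠ 2)
    have hI₁₂ := hI.ne (by simp) (by simp) (by decide : (1 : ℕ) ≠ 2)
    have hJ₀₁ := hJ.ne (by simp) (by simp) (by decide : (0 : ℕ) ≠ 1)
    have hJ₀₂ := hJ.ne (by simp) (by simp) (by decide : (0 : ℕ) ≠ 2)
    have hJ₁₂ := hJ.ne (by simp) (by simp) (by decide : (1 : ℕ) ≠ 2)
    have h₂ := hAP _ _ _ hJ₀₁ hJ₁₂ hJ₀₂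
    have h₁ := hAP _ _ _ hJ₀₂ hJ₁₂.symm hJ₀₁
    have h₀ := hAP _ _ _ hJ₁₂ hJ₀₂.symm hJ₀₁.symm
    simp only [sum_range_succ, sum_range_zero]
    norm_num
    generalize I 0 = x, I 1 = y, I 2 = z at hI₀₁ hI₀₂ hI₁₂ ⊢
    -- each of the six orders of the rows turns the sum into `±(a₁ + a₂ - 2 a₃)` for some order
    -- of the three columns
    fin_cases x <;> fin_cases y <;> fin_cases z <;> simp at hI₀₁ hI₀₂ hI₁₂ ⊢ <;> intro h
    · exact h₂ (by linear_combination -h)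
    · exact h₀ (by linear_combination h)
    · exact h₁ (by linear_combination h)
    · exact h₁ (by linear_combination -h)
    · exact h₀ (by linear_combination -h)
    · exact h₂ (by linear_combination h)

end APFree

theorem statement8_general (n : ℕ)
    (F : Type*) [Field F] [Fintype F] (hodd : Odd (Fintype.card F))
    (A : Finset F) (hA : A.card = n)
    (h3AP : ∀ x ∈ A, ∀ y ∈ A, ∀ z ∈ A, x ≠ y → y ≠ z → x ≠ z → x + y ≠ 2 * z) :
    ∃ c : Fin 3 × Fin n → Fin 1 → F, IsMR F 3 n 1 c := by
  have h2 : (2 : F) ≠ 0 := Ring.two_ne_zero fun h => by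
    have := FiniteField.even_card_iff_char_two.1 h
    rw [Nat.odd_iff] at hodd
    omega
  let e := A.equivFinOfCardEq hA
  let a : Fin n → F := fun j => e.symm j
  have ha : Injective a := Subtype.val_injective.comp e.symm.injective
  have hAP : ∀ j₁ j₂ j₃, j₁ ≠ j₂ → j₂ ≠ j₃ → j₁ ≠ j₃ → a j₁ + a j₂ ≠ 2 * a j₃ :=
    fun j₁ j₂ j₃ h₁₂ h₂₃ h₁₃ =>
      h3AP _ (e.symm j₁).2 _ (e.symm j₂).2 _ (e.symm j₃).2 (ha.ne h₁₂) (ha.ne h₂₃) (ha.ne h₁₃)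
  refine ⟨fun p _ => ((p.1 : ℕ) : F) * a p.2, ?_⟩
  rintro E ⟨E', G, hE', hG, rfl⟩
  refine rank_submatrix_col_eq_card _ _ fun X hXE hHX => ?_
  refine (isGridFlow_of_gridH_mulVec_eq_zero hHX).eq_zero_of_cycleSum_ne_zero
    (w := fun p => ((p.1 : ℕ) : F) * a p.2)
    (fun k hk I J hI hJ => cycleSum_ne_zero_of_forall_add_ne_two_mul h2 ha hAP hk hI hJ)
    hE' hG (fun p hp => ?_) ?_
  · by_contra h
    exact hp (hXE p h)
  · exact (gridH_mulVec_inr_inr _ X 0).symm.trans (congrFun hHX _)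

/-- Theorem 3.10.  Let `q` be an odd prime power (i.e. `F` a finite
field of odd cardinality), `n ≥ 3`, and let `A ⊆ F_q` have size `n` and contain no
3-term arithmetic progression: no pairwise distinct `x, y, z ∈ A` satisfy `x + y = 2z`.
Then there exists an MR `(m=3, n, a=1, b=1, h=1)` grid code over `F_q`. -/
theorem statement8 (n : ℕ) (hn : 3 ≤ n)
    (F : Type*) [Field F] [Fintype F] (hodd : Odd (Fintype.card F))
    (A : Finset F) (hA : A.card = n)
    (h3AP : ∀ x ∈ A, ∀ y ∈ A, ∀ z ∈ A, x ≠ y → y ≠ z → x ≠ z → x + y ≠ 2 * z) :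
    ∃ c : Fin 3 × Fin n → Fin 1 → F, IsMR F 3 n 1 c :=
  statement8_general n F hodd A hA h3AP
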